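/- For a finite DTMC (S, P), avoid set C ⊆ S and target set B ⊆ S, the constrained reachability probability satisfies the fixed-point equations used by the SMT encoding of the counterfactual-world probability: PUntil s = 1 for every s ∈ B, PUntil s = 0 for every s ∈ C \ B, and PUntil s = ∑_{s' ∈ S} P s s' · PUntil s' for every s ∉ B ∪ C. -/

import Mathlib

open scoped Classical

noncomputable def untilN {S : Type*} [Fintype S] (P : S → S → ℝ) (C B : Set S) :
    ℕ → S → ℝ
  | 0, s => if s ∈ B then 1 else 0
  | n + 1, s =>
      if s ∈ B then 1 else if s ∈ C then 0 else ∑ s' : S, P s s' * untilN P C B n s'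

/-! The values `untilN P C B n s` increase with `n` and stay in `[0, 1]`, so they converge to
their supremum. On `B` and on `C \ B` they are constant; elsewhere, letting `n → ∞` in the
recursion (a finite sum) gives the fixed-point equation. -/

open Filter Topology

namespace untilN

variable {S : Type*} [Fintype S] (P : S → S → ℝ) (C B : Set S)

theorem eq_one_of_mem {s : S} (hs : s ∈ B) (n : ℕ) : untilN P C B n s = 1 := by
  cases n <;> simp [untilN, hs]

theorem eq_zero_of_mem_diff {s : S} (hs : s ∈ C \ B) (n : ℕ) : untilN P C B n s = 0 := by
  cases n <;> simp [untilN, hs.1, hs.2]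

theorem succ_eq_sum_of_notMem {s : S} (hs : s ∉ B ∪ C) (n : ℕ) :
    untilN P C B (n + 1) s = ∑ s', P s s' * untilN P C B n s' := by
  simp only [Set.mem_union, not_or] at hs
  simp [untilN, hs.1, hs.2]

variable {P}

theorem nonneg (hP : ∀ s s', 0 ≤ P s s') (n : ℕ) (s : S) : 0 ≤ untilN P C B n s := by
  induction n generalizing s with
  | zero => unfold untilN; split <;> norm_num
  | succ n ih =>
    unfold untilN
    split_ifs
    · exact zero_le_one
    · exact le_rfl
    · exact Finset.sum_nonneg fun s' _ => mul_nonneg (hP s s') (ih s')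

theorem le_one (hP : ∀ s s', 0 ≤ P s s') (hsum : ∀ s, ∑ s', P s s' ≤ 1) (n : ℕ) (s : S) :
    untilN P C B n s ≤ 1 := by
  induction n generalizing s with
  | zero => unfold untilN; split <;> norm_num
  | succ n ih =>
    unfold untilN
    split_ifs
    · exact le_rfl
    · exact zero_le_one
    · calc ∑ s', P s s' * untilN P C B n s'
          ≤ ∑ s', P s s' := Finset.sum_le_sum fun s' _ =>
            mul_le_of_le_one_right (hP s s') (ih s')
        _ ≤ 1 := hsum s

theorem le_succ (hP : ∀ s s', 0 ≤ P s s') (n : ℕ) (s : S) :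
    untilN P C B n s ≤ untilN P C B (n + 1) s := by
  induction n generalizing s with
  | zero =>
    by_cases hB : s ∈ B
    · simp [untilN, hB]
    · simpa [untilN, hB] using nonneg C B hP 1 s
  | succ n ih =>
    conv_rhs => unfold untilN
    unfold untilN
    split_ifs
    · exact le_rfl
    · exact le_rfl
    · exact Finset.sum_le_sum fun s' _ => mul_le_mul_of_nonneg_left (ih s') (hP s s')

theorem tendsto_iSup (hP : ∀ s s', 0 ≤ P s s') (hsum : ∀ s, ∑ s', P s s' ≤ 1) (s : S) :
    Tendsto (fun n => untilN P C B n s) atTop (𝓝 (⨆ n, untilN P C B n s)) :=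
  tendsto_atTop_ciSup (monotone_nat_of_le_succ fun n => le_succ C B hP n s)
    ⟨1, Set.forall_mem_range.2 fun n => le_one C B hP hsum n s⟩

end untilN

theorem until_fixedPoint_general {S : Type*} [Fintype S]
    (P : S → S → ℝ)
    (hP : ∀ s s' : S, 0 ≤ P s s')
    (hsum : ∀ s : S, ∑ s' : S, P s s' = 1)
    (C B : Set S) :
    (∀ s ∈ B, (⨆ n : ℕ, untilN P C B n s) = 1) ∧
    (∀ s ∈ C \ B, (⨆ n : ℕ, untilN P C B n s) = 0) ∧
    (∀ s ∉ B ∪ C,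
        (⨆ n : ℕ, untilN P C B n s) =
          ∑ s' : S, P s s' * ⨆ n : ℕ, untilN P C B n s') := by
  have htendsto := untilN.tendsto_iSup C B hP fun s => (hsum s).le
  refine ⟨fun s hs => by simp [untilN.eq_one_of_mem P C B hs],
    fun s hs => by simp [untilN.eq_zero_of_mem_diff P C B hs], fun s hs => ?_⟩
  have hshift := (htendsto s).comp (tendsto_add_atTop_nat 1)
  simp only [Function.comp_def, untilN.succ_eq_sum_of_notMem P C B hs] at hshift
  exact tendsto_nhds_unique hshift
    (tendsto_finsetSum _ fun s' _ => (htendsto s').const_mul (P s s'))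

/-- For a finite DTMC (S, P), avoid set C ⊆ S and target set B ⊆ S,
the constrained reachability probability `PUntil s = ⨆ₙ until n s` satisfies the
fixed-point equations used by the SMT encoding of the counterfactual-world
probability: `PUntil s = 1` for `s ∈ B`, `PUntil s = 0` for `s ∈ C \ B`, and
`PUntil s = ∑ s', P s s' * PUntil s'` for `s ∉ B ∪ C`. -/
theorem until_fixedPoint {S : Type*} [Fintype S] [Nonempty S]
    (P : S → S → ℝ)
    (hP : ∀ s s' : S, 0 ≤ P s s')
    (hsum : ∀ s : S, ∑ s' : S, P s s' = 1)
    (C B : Set S) :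
    (∀ s ∈ B, (⨆ n : ℕ, untilN P C B n s) = 1) ∧
    (∀ s ∈ C \ B, (⨆ n : ℕ, untilN P C B n s) = 0) ∧
    (∀ s ∉ B ∪ C,
        (⨆ n : ℕ, untilN P C B n s) =
          ∑ s' : S, P s s' * ⨆ n : ℕ, untilN P C B n s') :=
  until_fixedPoint_general P hP hsum C B
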